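/- arXiv:2002.11880 — 5 statements merged into one kernel-verified Lean document; each statement's English description precedes it below -/
import Mathlib

section
/- Let t_e = Σ_{i=1}^R X_i be a sum of R independent Bernoulli(q) random variables, and define f_e = t_e/R if t_e/R ≤ 1/√(εR) and f_e = 0 otherwise, where Rq < 1 and ε ∈ (0,1). Then E[f_e] ≤ q and E[f_e] ≥ (1-ε)q. -/
/-!
Write `t = ∑ i, X i` and `u = √(R/ε)`, so that `f_e = t/R` if `t ≤ u` and `0` otherwise. The upper
bound is `f_e ≤ t/R`. For the lower bound let `m = ⌊u⌋` (the case `R ≤ u`, where nothing is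
truncated, being trivial). An integer `t > u` satisfies `t ≥ m + 1`, hence `t ≤ t(t-1)/m`, so
`R f_e ≥ t - t(t-1)/m` pointwise. Since the `X i` are `0/1`-valued and pairwise independent,
`E[t(t-1)] = R(R-1)q²`, whence `E[f_e] ≥ q - (R-1)q²/m`, and `(R-1)q ≤ εm` follows from `Rq < 1`,
`ε(m+1)² > R` and `m + 1 ≤ R`.
-/

open MeasureTheory ProbabilityTheory Finset

section ZeroOne

variable {ι : Type*} [Fintype ι] {x : ι → ℝ}

lemma exists_nat_sum_eq_of_eq_zero_or_eq_one (h01 : ∀ i, x i = 0 ∨ x i = 1) :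
    ∃ n : ℕ, ∑ i, x i = n := by
  refine ⟨#{i | x i = 1}, ?_⟩
  rw [card_filter, Nat.cast_sum]
  exact sum_congr rfl fun i _ => by rcases h01 i with h | h <;> simp [h]

lemma sum_le_card_of_eq_zero_or_eq_one (h01 : ∀ i, x i = 0 ∨ x i = 1) :
    ∑ i, x i ≤ Fintype.card ι := by
  have hx1 : ∀ i, x i ≤ 1 := fun i => by rcases h01 i with h | h <;> simp [h]
  simpa using sum_le_sum fun i (_ : i ∈ univ) => hx1 i

lemma sum_mul_sum_sub_one_eq_sum_offDiag (h01 : ∀ i, x i = 0 ∨ x i = 1) :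
    (∑ i, x i) * (∑ i, x i - 1) = ∑ p ∈ univ.offDiag, x p.1 * x p.2 := by
  classical
  have hsq : ∀ i, x i * x i = x i := fun i => by rcases h01 i with h | h <;> simp [h]
  rw [mul_sub_one, sum_mul_sum, ← sum_product', ← diag_union_offDiag,
    sum_union (disjoint_diag_offDiag _), sum_diag]
  simp only [hsq, add_sub_cancel_left]

end ZeroOne

lemma natCast_sub_mul_sub_one_div_le_ite (n : ℕ) {m : ℕ} {u : ℝ} (hm : 0 < m) (hmu : (m : ℝ) ≤ u) :
    (n : ℝ) - n * (n - 1) / m ≤ if (n : ℝ) ≤ u then (n : ℝ) else 0 := by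
  have hm' : (0 : ℝ) < m := by exact_mod_cast hm
  split_ifs with hnu
  · have : (0 : ℝ) ≤ n * (n - 1) := by
      rcases n.eq_zero_or_pos with rfl | hn
      · simp
      · exact mul_nonneg n.cast_nonneg (sub_nonneg.2 (by exact_mod_cast hn))
    linarith [div_nonneg this hm'.le]
  · have hmn : m < n := by exact_mod_cast hmu.trans_lt (not_le.1 hnu)
    have hmn' : (m : ℝ) + 1 ≤ n := by exact_mod_cast hmn
    rw [sub_nonpos, le_div_iff₀ hm']
    nlinarith

lemma sub_one_mul_add_one_sq_le {R m : ℝ} (hm : 1 ≤ m) (hmR : m + 1 ≤ R) :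
    (R - 1) * (m + 1) ^ 2 ≤ R ^ 2 * m := by
  nlinarith [mul_nonneg (sub_nonneg.2 hmR) (sub_nonneg.2 hm), mul_self_nonneg (R - (m + 1))]

lemma sub_one_mul_le_mul_of_le_mul_add_one_sq {R m q ε : ℝ} (hm : 1 ≤ m) (hmR : m + 1 ≤ R)
    (hRq : R * q ≤ 1) (hR : R ≤ ε * (m + 1) ^ 2) : (R - 1) * q ≤ ε * m := by
  have hR0 : 0 < R := by linarith
  refine le_of_mul_le_mul_right ?_ (by positivity : 0 < R * (m + 1) ^ 2)
  calc (R - 1) * q * (R * (m + 1) ^ 2) = (R * q) * ((R - 1) * (m + 1) ^ 2) := by ring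
    _ ≤ 1 * (R ^ 2 * m) := mul_le_mul hRq (sub_one_mul_add_one_sq_le hm hmR)
      (mul_nonneg (by linarith) (by positivity)) zero_le_one
    _ = R * m * R := by ring
    _ ≤ R * m * (ε * (m + 1) ^ 2) := by gcongr
    _ = ε * m * (R * (m + 1) ^ 2) := by ring

section Bernoulli

variable {Ω ι : Type*} [MeasurableSpace Ω] {μ : Measure Ω} [IsFiniteMeasure μ] {X : ι → Ω → ℝ}

lemma integrable_of_forall_eq_zero_or_eq_one {f : Ω → ℝ} (hf : Measurable f)
    (h01 : ∀ ω, f ω = 0 ∨ f ω = 1) : Integrable f μ :=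
  .of_bound hf.aestronglyMeasurable 1 <| .of_forall fun ω => by rcases h01 ω with h | h <;> simp [h]

lemma integral_sum_eq_card_mul [Fintype ι] (hmeas : ∀ i, Measurable (X i))
    (h01 : ∀ i ω, X i ω = 0 ∨ X i ω = 1) {q : ℝ} (hmean : ∀ i, ∫ ω, X i ω ∂μ = q) :
    ∫ ω, ∑ i, X i ω ∂μ = Fintype.card ι * q := by
  rw [integral_finsetSum _ fun i _ => integrable_of_forall_eq_zero_or_eq_one (hmeas i) (h01 i)]
  simp [hmean]

lemma integrable_mul_of_eq_zero_or_eq_one (hmeas : ∀ i, Measurable (X i))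
    (h01 : ∀ i ω, X i ω = 0 ∨ X i ω = 1) (i j : ι) : Integrable (fun ω => X i ω * X j ω) μ :=
  integrable_of_forall_eq_zero_or_eq_one ((hmeas i).mul (hmeas j)) fun ω => by
    rcases h01 i ω with h | h <;> rcases h01 j ω with h' | h' <;> simp [h, h']

lemma integrable_sum_mul_sum_sub_one [Fintype ι] (hmeas : ∀ i, Measurable (X i))
    (h01 : ∀ i ω, X i ω = 0 ∨ X i ω = 1) :
    Integrable (fun ω => (∑ i, X i ω) * (∑ i, X i ω - 1)) μ := by
  simp_rw [sum_mul_sum_sub_one_eq_sum_offDiag (h01 · _)]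
  exact integrable_finsetSum _ fun p _ => integrable_mul_of_eq_zero_or_eq_one hmeas h01 p.1 p.2

lemma integral_sum_mul_sum_sub_one [Fintype ι] (hmeas : ∀ i, Measurable (X i))
    (h01 : ∀ i ω, X i ω = 0 ∨ X i ω = 1) (hindep : Pairwise fun i j => IndepFun (X i) (X j) μ)
    {q : ℝ} (hmean : ∀ i, ∫ ω, X i ω ∂μ = q) :
    ∫ ω, (∑ i, X i ω) * (∑ i, X i ω - 1) ∂μ = Fintype.card ι * (Fintype.card ι - 1) * q ^ 2 := by
  simp_rw [sum_mul_sum_sub_one_eq_sum_offDiag (h01 · _)]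
  rw [integral_finsetSum _ fun p _ => integrable_mul_of_eq_zero_or_eq_one hmeas h01 p.1 p.2]
  have hpair : ∀ p ∈ univ.offDiag, ∫ ω, X p.1 ω * X p.2 ω ∂μ = q ^ 2 := fun p hp => by
    simpa [hmean, sq] using (hindep (mem_offDiag.1 hp).2.2).integral_mul_eq_mul_integral
      (hmeas _).aestronglyMeasurable (hmeas _).aestronglyMeasurable
  rw [sum_congr rfl hpair, sum_const, offDiag_card, card_univ, nsmul_eq_mul]
  rw [Nat.cast_sub (Nat.le_mul_self _)]
  push_cast
  ring

lemma integral_ite_sum_le_card_mul [Fintype ι] (hmeas : ∀ i, Measurable (X i))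
    (h01 : ∀ i ω, X i ω = 0 ∨ X i ω = 1) {q : ℝ} (hmean : ∀ i, ∫ ω, X i ω ∂μ = q) (u : ℝ) :
    ∫ ω, (if ∑ i, X i ω ≤ u then ∑ i, X i ω else 0) ∂μ ≤ Fintype.card ι * q := by
  have ht0 : ∀ ω, 0 ≤ ∑ i, X i ω := fun ω =>
    sum_nonneg fun i _ => by rcases h01 i ω with h | h <;> simp [h]
  rw [← integral_sum_eq_card_mul hmeas h01 hmean]
  refine integral_mono_of_nonneg (.of_forall fun ω => ?_)
    (integrable_finsetSum _ fun i _ => integrable_of_forall_eq_zero_or_eq_one (hmeas i) (h01 i))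
    (.of_forall fun ω => ?_)
  all_goals dsimp only; split_ifs <;> simp [ht0]

lemma card_mul_sub_le_integral_ite_sum [Fintype ι] (hmeas : ∀ i, Measurable (X i))
    (h01 : ∀ i ω, X i ω = 0 ∨ X i ω = 1) (hindep : Pairwise fun i j => IndepFun (X i) (X j) μ)
    {q : ℝ} (hmean : ∀ i, ∫ ω, X i ω ∂μ = q) {m : ℕ} {u : ℝ} (hm : 0 < m) (hmu : (m : ℝ) ≤ u) :
    Fintype.card ι * q - Fintype.card ι * (Fintype.card ι - 1) * q ^ 2 / m ≤
      ∫ ω, (if ∑ i, X i ω ≤ u then ∑ i, X i ω else 0) ∂μ := by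
  have ht : Integrable (fun ω => ∑ i, X i ω) μ :=
    integrable_finsetSum _ fun i _ => integrable_of_forall_eq_zero_or_eq_one (hmeas i) (h01 i)
  have htm : Measurable fun ω => ∑ i, X i ω := Finset.measurable_sum _ fun i _ => hmeas i
  rw [← integral_sum_eq_card_mul hmeas h01 hmean,
    ← integral_sum_mul_sum_sub_one hmeas h01 hindep hmean,
    ← integral_div, ← integral_sub ht ((integrable_sum_mul_sum_sub_one hmeas h01).div_const _)]
  refine integral_mono (ht.sub ((integrable_sum_mul_sum_sub_one hmeas h01).div_const _))
    ((ht.indicator (measurableSet_le htm (measurable_const (a := u)))).congr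
      (.of_forall fun ω => by simp [Set.indicator_apply])) fun ω => ?_
  obtain ⟨n, hn⟩ := exists_nat_sum_eq_of_eq_zero_or_eq_one (h01 · ω)
  simpa only [hn] using natCast_sub_mul_sub_one_div_le_ite n hm hmu

lemma one_sub_mul_card_mul_le_integral_ite_sum [Fintype ι] (hmeas : ∀ i, Measurable (X i))
    (h01 : ∀ i ω, X i ω = 0 ∨ X i ω = 1) (hindep : Pairwise fun i j => IndepFun (X i) (X j) μ)
    {q ε u : ℝ} (hmean : ∀ i, ∫ ω, X i ω ∂μ = q) (hq : 0 ≤ q) (hRq : Fintype.card ι * q ≤ 1)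
    (hε0 : 0 ≤ ε) (hε1 : ε ≤ 1) (hu : 0 ≤ u) (hRu : Fintype.card ι ≤ ε * u ^ 2) :
    (1 - ε) * (Fintype.card ι * q) ≤ ∫ ω, (if ∑ i, X i ω ≤ u then ∑ i, X i ω else 0) ∂μ := by
  set R := Fintype.card ι
  by_cases hRu' : (R : ℝ) ≤ u
  · have hnotrunc : ∀ ω, (if ∑ i, X i ω ≤ u then ∑ i, X i ω else 0) = ∑ i, X i ω := fun ω =>
      if_pos ((sum_le_card_of_eq_zero_or_eq_one (h01 · ω)).trans hRu')
    simp only [hnotrunc, integral_sum_eq_card_mul hmeas h01 hmean]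
    nlinarith [mul_nonneg (mul_nonneg hε0 R.cast_nonneg) hq]
  set m := ⌊u⌋₊
  have hmu : (m : ℝ) ≤ u := Nat.floor_le hu
  have hum : u < m + 1 := Nat.lt_floor_add_one u
  have hmR : m < R := by exact_mod_cast hmu.trans_lt (not_le.1 hRu')
  have hmR' : (m : ℝ) + 1 ≤ R := by exact_mod_cast hmR
  have hm : 1 ≤ m := Nat.le_floor <| by
    rw [Nat.cast_one]
    nlinarith [mul_le_mul_of_nonneg_right hε1 (sq_nonneg u), m.cast_nonneg (α := ℝ)]
  have hεm : (R - 1) * q ≤ ε * m :=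
    sub_one_mul_le_mul_of_le_mul_add_one_sq (by exact_mod_cast hm) hmR' hRq (hRu.trans (by gcongr))
  have hm0 : (0 : ℝ) < m := by exact_mod_cast hm
  calc (1 - ε) * (R * q) = R * q - ε * m * (R * q) / m := by field_simp
    _ ≤ R * q - (R - 1) * q * (R * q) / m := by gcongr
    _ = R * q - R * (R - 1) * q ^ 2 / m := by ring
    _ ≤ _ := card_mul_sub_le_integral_ite_sum hmeas h01 hindep hmean hm hmu

end Bernoulli

lemma div_le_one_div_sqrt_mul_iff {x R ε : ℝ} (hR : 0 < R) (hε : 0 < ε) :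
    x / R ≤ 1 / √(ε * R) ↔ x ≤ √(R / ε) := by
  have hmul : √(R / ε) * √(ε * R) = R := by
    rw [← Real.sqrt_mul (by positivity), show R / ε * (ε * R) = R ^ 2 by field_simp,
      Real.sqrt_sq hR.le]
  have : 1 / √(ε * R) = √(R / ε) / R := by
    rw [div_eq_div_iff (by positivity) hR.ne', one_mul, hmul]
  rw [this, div_le_div_iff_of_pos_right hR]

theorem stmt_4_general {Ω : Type*} [MeasurableSpace Ω] (μ : Measure Ω) [IsProbabilityMeasure μ]
    (R : ℕ) (hR : 0 < R) (q ε : ℝ) (hq0 : 0 ≤ q)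
    (hRq : (R : ℝ) * q < 1) (hε : 0 < ε) (hε1 : ε < 1)
    (X : Fin R → Ω → ℝ)
    (hmeas : ∀ i, Measurable (X i))
    (hber : ∀ i ω, X i ω = 0 ∨ X i ω = 1)
    (hmean : ∀ i, ∫ ω, X i ω ∂μ = q)
    (hind : iIndepFun X μ) :
    (∫ ω, (if (∑ i, X i ω) / R ≤ 1 / Real.sqrt (ε * R) then (∑ i, X i ω) / R else 0) ∂μ) ≤ q ∧
    (1 - ε) * q ≤
      ∫ ω, (if (∑ i, X i ω) / R ≤ 1 / Real.sqrt (ε * R) then (∑ i, X i ω) / R else 0) ∂μ := by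
  have hR0 : (0 : ℝ) < R := by exact_mod_cast hR
  have hf : ∀ ω, (if (∑ i, X i ω) / R ≤ 1 / √(ε * R) then (∑ i, X i ω) / R else 0) =
      (if ∑ i, X i ω ≤ √(R / ε) then ∑ i, X i ω else 0) / R := fun ω => by
    simp only [div_le_one_div_sqrt_mul_iff hR0 hε]
    split_ifs <;> simp
  simp only [hf, integral_div]
  constructor
  · rw [div_le_iff₀ hR0]
    exact (integral_ite_sum_le_card_mul hmeas hber hmean _).trans_eq (by simp [mul_comm])
  · rw [le_div_iff₀ hR0]
    have hu : (Fintype.card (Fin R) : ℝ) ≤ ε * √(R / ε) ^ 2 := by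
      rw [Real.sq_sqrt (by positivity), Fintype.card_fin]
      exact (mul_div_cancel₀ _ hε.ne').ge
    calc (1 - ε) * q * R = (1 - ε) * (Fintype.card (Fin R) * q) := by
          rw [Fintype.card_fin]; ring
      _ ≤ _ := one_sub_mul_card_mul_le_integral_ite_sum hmeas hber
        (fun i j hij => hind.indepFun hij) hmean hq0 (by simpa using hRq.le) hε.le hε1.le
        (Real.sqrt_nonneg _) hu

/-- With `t_e = Σ_{i=1}^R X_i` a sum of `R` independent Bernoulli(q)
variables, `R·q < 1`, and `f_e = t_e/R` if `t_e/R ≤ 1/√(εR)` and `0` otherwise, one has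
`E[f_e] ≤ q` and `E[f_e] ≥ (1-ε)q`. -/
theorem stmt_4 {Ω : Type*} [MeasurableSpace Ω] (μ : Measure Ω) [IsProbabilityMeasure μ]
    (R : ℕ) (hR : 0 < R) (q ε : ℝ) (hq0 : 0 ≤ q) (hq1 : q ≤ 1)
    (hRq : (R : ℝ) * q < 1) (hε : 0 < ε) (hε1 : ε < 1)
    (X : Fin R → Ω → ℝ)
    (hmeas : ∀ i, Measurable (X i))
    (hber : ∀ i ω, X i ω = 0 ∨ X i ω = 1)
    (hmean : ∀ i, ∫ ω, X i ω ∂μ = q)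
    (hind : iIndepFun X μ) :
    (∫ ω, (if (∑ i, X i ω) / R ≤ 1 / Real.sqrt (ε * R) then (∑ i, X i ω) / R else 0) ∂μ) ≤ q ∧
    (1 - ε) * q ≤
      ∫ ω, (if (∑ i, X i ω) / R ≤ 1 / Real.sqrt (ε * R) then (∑ i, X i ω) / R else 0) ∂μ :=
  stmt_4_general μ R hR q ε hq0 hRq hε hε1 X hmeas hber hmean hind
end

section
/- Let C be a graph with maximum degree Δ_C, τ₋, τ₊ ∈ (0,1), q : E → [0,1], N' ⊆ N where N is a set of 'non-crucial' edges with q_e ≤ τ₋ and N \ N' consists of non-crucial edges {u,v} with d_C(u,v) < λ, and C a set of 'crucial' edges with q_e ≥ τ₊ for each e ∈ C. If Δ_C ≤ 1/τ₊ and 4τ₋(1/τ₊)^{2λ+1} ≤ ε, then q(N') ≥ q(N) − ε·q(C), where q(S) = Σ_{e∈S} q_e. -/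
/-!
Charge every pair `{u, v}` of `N ∖ N'` to an edge `{u, w}` of `C` at `u`: it exists because
`u ≠ v` are joined by a walk, and `v` lies in the open ball of radius `λ` around `u`. So a crucial
edge is charged at most twice the size of such a ball. For maximum degree `Δ ≥ 2` the ball has at
most `(Δ + 1) ^ (λ - 1) ≤ Δ ^ (2λ)` vertices, and for `Δ ≤ 1` at most two. With `Δ ≤ 1/τ₊`,
`|C| τ₊ ≤ q(C)` and `q_e ≤ τ₋` on `N ∖ N'` this gives
`q(N ∖ N') ≤ 4 τ₋ (1/τ₊)^(2λ+1) q(C) ≤ ε q(C)`.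
-/

open scoped Classical

open Finset

namespace SimpleGraph

variable {V : Type*} {G : SimpleGraph V} {c u v : V}

theorem ball_add_one_subset {r : ℕ∞} (hr : 0 < r) :
    G.ball c (r + 1) ⊆ ⋃ w ∈ G.ball c r, G.ball w 2 := by
  intro v hv
  rw [mem_ball] at hv
  obtain ⟨p, hp⟩ := exists_walk_of_edist_ne_top (ne_top_of_lt hv)
  simp only [Set.mem_iUnion, mem_ball, exists_prop]
  cases p with
  | nil => exact ⟨c, by simpa using hr, by simp⟩
  | @cons _ w _ h p =>
    refine ⟨w, ?_, by simp [edist_eq_one_iff_adj.2 h]⟩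
    rw [← hp, Walk.length_cons, Nat.cast_add, Nat.cast_one] at hv
    exact (edist_le p).trans_lt (WithTop.add_lt_add_iff_right ENat.one_ne_top |>.1 hv)

variable [Fintype V]

theorem ncard_ball_two_le [DecidableRel G.Adj] (c : V) :
    (G.ball c 2).ncard ≤ G.maxDegree + 1 := by
  rw [ball_two]
  refine (Set.ncard_insert_le _ _).trans (Nat.add_le_add_right ?_ 1)
  rw [← coe_neighborFinset, Set.ncard_coe_finset, card_neighborFinset_eq_degree]
  exact G.degree_le_maxDegree c

theorem ncard_ball_le_pow [DecidableRel G.Adj] (c : V) (r : ℕ) :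
    (G.ball c (r + 1)).ncard ≤ (G.maxDegree + 1) ^ r := by
  induction r with
  | zero => simp
  | succ r ih =>
    calc (G.ball c (↑(r + 1) + 1)).ncard
        ≤ (⋃ w ∈ (G.ball c (r + 1)).toFinset, G.ball w 2).ncard := by
          refine Set.ncard_le_ncard ?_
          simpa only [Set.mem_toFinset, Nat.cast_add, Nat.cast_one] using
            ball_add_one_subset (G := G) (c := c) (r := r + 1) (by simp)
      _ ≤ ∑ w ∈ (G.ball c (r + 1)).toFinset, (G.ball w 2).ncard := set_ncard_biUnion_le _ _
      _ ≤ ∑ _w ∈ (G.ball c (r + 1)).toFinset, (G.maxDegree + 1) :=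
          sum_le_sum fun w _ => ncard_ball_two_le w
      _ = (G.ball c (r + 1)).ncard * (G.maxDegree + 1) := by
          rw [sum_const, smul_eq_mul, Set.ncard_eq_toFinset_card']
      _ ≤ (G.maxDegree + 1) ^ (r + 1) := by rw [pow_succ]; gcongr

theorem Reachable.adj_of_maxDegree_le_one [DecidableRel G.Adj] (hr : G.Reachable u v)
    (hne : u ≠ v) (hΔ : G.maxDegree ≤ 1) : G.Adj u v := by
  by_contra hnadj
  obtain ⟨p, hp⟩ := hr.exists_walk_length_eq_dist
  obtain ⟨x, a, b, hxa, hab, -, hxb⟩ :=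
    p.exists_adj_adj_not_adj_ne hp (hr.one_lt_dist_of_ne_of_not_adj hne hnadj)
  have : ({x, b} : Finset V) ⊆ G.neighborFinset a := by
    intro z hz
    rcases mem_insert.1 hz with rfl | hz
    · simpa using hxa.symm
    · simpa [mem_singleton.1 hz] using hab
  have := (card_le_card this).trans_eq (card_neighborFinset_eq_degree G a)
  rw [card_pair hxb] at this
  have := G.degree_le_maxDegree a
  omega

theorem ncard_ball_le_two [DecidableRel G.Adj] (hΔ : G.maxDegree ≤ 1) (c : V) (r : ℕ∞) :
    (G.ball c r).ncard ≤ 2 := by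
  have : G.ball c r ⊆ G.ball c 2 := by
    intro v hv
    rw [ball_two, Set.mem_insert_iff, mem_neighborSet, or_iff_not_imp_left]
    intro hne
    exact (reachable_of_edist_ne_top (ne_top_of_lt hv)).symm.adj_of_maxDegree_le_one
      (Ne.symm hne) hΔ
  exact (Set.ncard_le_ncard this).trans ((ncard_ball_two_le c).trans (by omega))

theorem ncard_ball_le_two_mul_pow [DecidableRel G.Adj] {x : ℝ} (hx : 1 ≤ x)
    (hΔ : (G.maxDegree : ℝ) ≤ x) (c : V) (r : ℕ) :
    ((G.ball c r).ncard : ℝ) ≤ 2 * x ^ (2 * r) := by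
  rcases r with _ | r
  · simp
  rcases le_or_gt G.maxDegree 1 with hΔ1 | hΔ2
  · calc ((G.ball c ↑(r + 1)).ncard : ℝ) ≤ 2 := by exact_mod_cast ncard_ball_le_two hΔ1 c _
      _ ≤ 2 * x ^ (2 * (r + 1)) := le_mul_of_one_le_right zero_le_two (one_le_pow₀ hx)
  · have hΔ2 : (2 : ℝ) ≤ G.maxDegree := by exact_mod_cast hΔ2
    calc ((G.ball c ↑(r + 1)).ncard : ℝ) ≤ ((G.maxDegree + 1) ^ r : ℕ) := by
          have := ncard_ball_le_pow (G := G) c r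
          push_cast at this ⊢
          exact_mod_cast this
      _ ≤ (x ^ 2) ^ (r + 1) := by
          push_cast
          calc ((G.maxDegree : ℝ) + 1) ^ r ≤ (x ^ 2) ^ r := by gcongr; nlinarith
            _ ≤ (x ^ 2) ^ (r + 1) := pow_le_pow_right₀ (one_le_pow₀ hx) r.le_succ
      _ ≤ 2 * x ^ (2 * (r + 1)) := by
          rw [← pow_mul]; linarith [one_le_pow₀ (n := 2 * (r + 1)) hx]

theorem card_le_of_forall_edist_lt [DecidableEq V] [DecidableRel G.Adj] {D : Finset (Sym2 V)}
    {r : ℕ∞} {B : ℝ} (hD : ∀ e ∈ D, ∀ u v, e = s(u, v) → u ≠ v ∧ G.edist u v < r)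
    (hB : ∀ f ∈ G.edgeFinset, ∀ c ∈ f, ((G.ball c r).ncard : ℝ) ≤ B) :
    (#D : ℝ) ≤ 2 * B * #G.edgeFinset := by
  have hfirst : ∀ e, ∃ u v w, e = s(u, v) ∧ (e ∈ D → G.Adj u w ∧ v ∈ G.ball u r) := by
    intro e
    induction e using Sym2.ind with | _ u v => ?_
    refine ⟨u, v, ?_⟩
    by_cases he : s(u, v) ∈ D
    · obtain ⟨hne, hlt⟩ := hD _ he u v rfl
      obtain ⟨p, -⟩ := exists_walk_of_edist_ne_top (ne_top_of_lt hlt)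
      cases p with
      | nil => exact absurd rfl hne
      | cons h _ => exact ⟨_, rfl, fun _ => ⟨h, by rwa [mem_ball, edist_comm]⟩⟩
    · exact ⟨u, rfl, fun h => absurd h he⟩
  choose fu fv fw hrep hfirst using hfirst
  have hmaps : ∀ e ∈ D, s(fu e, fw e) ∈ G.edgeFinset := fun e he => by
    simpa using (hfirst e he).1
  have hfiber : ∀ f ∈ G.edgeFinset, (#{e ∈ D | s(fu e, fw e) = f} : ℝ) ≤ 2 * B := by
    intro f hf
    induction f using Sym2.ind with | _ x y => ?_
    have hsub : {e ∈ D | s(fu e, fw e) = s(x, y)} ⊆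
        ({x, y} : Finset V).biUnion fun a => (G.ball a r).toFinset.image fun b => s(a, b) := by
      intro e he
      obtain ⟨heD, hFe⟩ := mem_filter.1 he
      have hu : fu e = x ∨ fu e = y := by rw [Sym2.eq_iff] at hFe; tauto
      refine mem_biUnion.2 ⟨fu e, by rcases hu with h | h <;> simp [h], ?_⟩
      exact mem_image.2 ⟨fv e, by simpa using (hfirst e heD).2, (hrep e).symm⟩
    have hcard : #{e ∈ D | s(fu e, fw e) = s(x, y)} ≤
        ∑ a ∈ ({x, y} : Finset V), (G.ball a r).ncard := by
      refine (card_le_card hsub).trans (card_biUnion_le.trans (sum_le_sum fun a _ => ?_))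
      exact card_image_le.trans (Set.ncard_eq_toFinset_card' _).ge
    calc (#{e ∈ D | s(fu e, fw e) = s(x, y)} : ℝ)
        ≤ ∑ a ∈ ({x, y} : Finset V), ((G.ball a r).ncard : ℝ) := by exact_mod_cast hcard
      _ ≤ ∑ _a ∈ ({x, y} : Finset V), B := sum_le_sum fun a ha => hB _ hf a (by
          rcases mem_insert.1 ha with rfl | ha
          · exact Sym2.mem_mk_left _ _
          · exact mem_singleton.1 ha ▸ Sym2.mem_mk_right _ _)
      _ ≤ 2 * B := by
          rw [sum_const, nsmul_eq_mul]
          have hB0 : 0 ≤ B := (Nat.cast_nonneg _).trans (hB _ hf x (Sym2.mem_mk_left _ _))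
          gcongr
          exact_mod_cast card_le_two
  calc (#D : ℝ) = ∑ f ∈ G.edgeFinset, (#{e ∈ D | s(fu e, fw e) = f} : ℝ) := by
        exact_mod_cast card_eq_sum_card_fiberwise hmaps
    _ ≤ ∑ _f ∈ G.edgeFinset, 2 * B := sum_le_sum hfiber
    _ = 2 * B * #G.edgeFinset := by rw [sum_const, nsmul_eq_mul, mul_comm]

end SimpleGraph

theorem stmt_7_general {V : Type*} [Fintype V] [DecidableEq V]
    (C : SimpleGraph V) [DecidableRel C.Adj]
    (q : Sym2 V → ℝ) (τm τp ε : ℝ) (lam : ℕ)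
    (hτm : 0 < τm) (hτp : 0 < τp)
    (hq : ∀ e : Sym2 V, 0 ≤ q e ∧ q e ≤ 1)
    (hcru : ∀ e ∈ C.edgeFinset, τp ≤ q e)
    (hdeg : (C.maxDegree : ℝ) ≤ 1 / τp)
    (N N' : Finset (Sym2 V)) (hsub : N' ⊆ N)
    (hN : ∀ e ∈ N, q e ≤ τm)
    (hfar : ∀ e ∈ N \ N', ∀ u v : V, e = s(u, v) →
      u ≠ v ∧ C.Reachable u v ∧ 1 ≤ C.dist u v ∧ C.dist u v < lam)
    (hε : 4 * τm * (1 / τp) ^ (2 * lam + 1) ≤ ε) :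
    (∑ e ∈ N, q e) - ε * (∑ e ∈ C.edgeFinset, q e) ≤ ∑ e ∈ N', q e := by
  have hedist : ∀ e ∈ N \ N', ∀ u v, e = s(u, v) → u ≠ v ∧ C.edist u v < lam := by
    intro e he u v huv
    obtain ⟨hne, hr, -, hlt⟩ := hfar e he u v huv
    exact ⟨hne, hr.coe_dist_eq_edist ▸ Nat.cast_lt.2 hlt⟩
  have hcount : (#(N \ N') : ℝ) ≤ 2 * (2 * (1 / τp) ^ (2 * lam)) * #C.edgeFinset :=
    C.card_le_of_forall_edist_lt hedist fun f hf c _ =>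
      C.ncard_ball_le_two_mul_pow (one_le_one_div hτp ((hcru f hf).trans (hq f).2)) hdeg c lam
  have hqD : ∑ e ∈ N \ N', q e ≤ #(N \ N') * τm := by
    simpa using sum_le_card_nsmul _ q τm fun e he => hN e (mem_sdiff.1 he).1
  have hqC : #C.edgeFinset * τp ≤ ∑ e ∈ C.edgeFinset, q e := by
    simpa using card_nsmul_le_sum _ q τp hcru
  have hε0 : 0 ≤ ε := le_trans (by positivity) hε
  have : ∑ e ∈ N \ N', q e ≤ ε * ∑ e ∈ C.edgeFinset, q e :=
    calc ∑ e ∈ N \ N', q e ≤ #(N \ N') * τm := hqD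
      _ ≤ 2 * (2 * (1 / τp) ^ (2 * lam)) * #C.edgeFinset * τm := by gcongr
      _ = 4 * τm * (1 / τp) ^ (2 * lam + 1) * (#C.edgeFinset * τp) := by
          rw [pow_succ]; field_simp; ring
      _ ≤ ε * ∑ e ∈ C.edgeFinset, q e := by gcongr
  linarith [sum_sdiff hsub (f := q)]

/-- With `C` the graph of crucial edges (`q_e ≥ τ₊` for `e ∈ C`), `N` a set
of non-crucial edges (`q_e ≤ τ₋`), `N' ⊆ N` such that every edge `{u,v} ∈ N ∖ N'` has
`1 ≤ d_C(u,v) < λ`, if the maximum degree of `C` is at most `1/τ₊` and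
`4τ₋(1/τ₊)^{2λ+1} ≤ ε`, then `q(N') ≥ q(N) − ε·q(C)`. -/
theorem stmt_7 {V : Type*} [Fintype V] [DecidableEq V]
    (C : SimpleGraph V) [DecidableRel C.Adj]
    (q : Sym2 V → ℝ) (τm τp ε : ℝ) (lam : ℕ)
    (hτm : 0 < τm) (hτp : 0 < τp) (hlam : 1 ≤ lam)
    (hq : ∀ e : Sym2 V, 0 ≤ q e ∧ q e ≤ 1)
    (hcru : ∀ e ∈ C.edgeFinset, τp ≤ q e)
    (hdeg : (C.maxDegree : ℝ) ≤ 1 / τp)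
    (N N' : Finset (Sym2 V)) (hsub : N' ⊆ N)
    (hN : ∀ e ∈ N, q e ≤ τm)
    (hfar : ∀ e ∈ N \ N', ∀ u v : V, e = s(u, v) →
      u ≠ v ∧ C.Reachable u v ∧ 1 ≤ C.dist u v ∧ C.dist u v < lam)
    (hε : 4 * τm * (1 / τp) ^ (2 * lam + 1) ≤ ε) :
    (∑ e ∈ N, q e) - ε * (∑ e ∈ C.edgeFinset, q e) ≤ ∑ e ∈ N', q e :=
  stmt_7_general C q τm τp ε lam hτm hτp hq hcru hdeg N N' hsub hN hfar hε
end

section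
/- Let P = ((𝒞₀,M₀),…,(𝒞_α,M_α)) be a profile (each M_i a matching of graph 𝒞_i) and let I be a collection of vertex-disjoint augmenting hyperwalks of P. Applying all hyperwalks of I to P yields a profile P' = ((𝒞₀,M'₀),…,(𝒞_α,M'_α)) satisfying Σ_{i=0}^α |M'_i| = Σ_{i=0}^α |M_i| + |I|. -/
open scoped Classical

/-- A hyperwalk of size `k`: a sequence of `k+1` vertices (whose consecutive pairs give the
edges `e₁,…,e_k` of a walk) together with a label `s_j ∈ {0,…,n-1}` for each edge. -/
structure Hyperwalk (V : Type*) (n k : ℕ) where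
  verts : Fin (k + 1) → V
  labels : Fin k → Fin n

namespace Hyperwalk

variable {V : Type*} [DecidableEq V] {n k : ℕ}

/-- The `j`-th edge of the hyperwalk. -/
def edge (W : Hyperwalk V n k) (j : Fin k) : Sym2 V :=
  s(W.verts j.castSucc, W.verts j.succ)

/-- Edges in odd positions (`e₁, e₃, …`, i.e. `0`-indexed even positions) carrying label `i`:
these get added to the matching `M i`. -/
def addSet (W : Hyperwalk V n k) (i : Fin n) : Finset (Sym2 V) :=
  ((Finset.univ : Finset (Fin k)).filter
      (fun j => j.val % 2 = 0 ∧ W.labels j = i)).image W.edge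

/-- Edges in even positions carrying label `i`: these get removed from `M i`. -/
def remSet (W : Hyperwalk V n k) (i : Fin n) : Finset (Sym2 V) :=
  ((Finset.univ : Finset (Fin k)).filter
      (fun j => j.val % 2 = 1 ∧ W.labels j = i)).image W.edge

/-- The set of vertices of the hyperwalk. -/
def vertSet (W : Hyperwalk V n k) : Finset V :=
  Finset.univ.image W.verts

end Hyperwalk

/-- `M` is a matching of the graph (edge set) `Cg`, with no self-loops. -/
def IsMatchingOf {V : Type*} (Cg M : Finset (Sym2 V)) : Prop :=
  M ⊆ Cg ∧ (∀ e ∈ M, ¬ e.IsDiag) ∧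
    ∀ e ∈ M, ∀ f ∈ M, ∀ v : V, v ∈ e → v ∈ f → e = f

/-- A profile: each `M i` is a matching of the graph `Cg i`. -/
def IsProfile {V : Type*} {n : ℕ} (Cg M : Fin n → Finset (Sym2 V)) : Prop :=
  ∀ i, IsMatchingOf (Cg i) (M i)

/-- `d_P(v)`: the number of matchings of the profile in which `v` is matched. -/
noncomputable def dP {V : Type*} {n : ℕ} (M : Fin n → Finset (Sym2 V)) (v : V) : ℕ :=
  (Finset.univ.filter (fun i : Fin n => ∃ e ∈ M i, v ∈ e)).card

/-- The result `P Δ W` of applying the hyperwalk `W` to the profile with matchings `M`: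
`M' i = (M i ∪ {e_j : j odd, s_j = i}) ∖ {e_j : j even, s_j = i}`. -/
def applyHW {V : Type*} [DecidableEq V] {n k : ℕ}
    (M : Fin n → Finset (Sym2 V)) (W : Hyperwalk V n k) : Fin n → Finset (Sym2 V) :=
  fun i => (M i ∪ W.addSet i) \ W.remSet i

/-- `W` is an augmenting hyperwalk of the profile `(Cg, M)`: applying it again yields a
profile, `d_P` is unchanged at every vertex of the walk other than the two (distinct)
endpoints, and it increases by exactly one at each of the two endpoints. -/
def IsAugmenting {V : Type*} [DecidableEq V] {n k : ℕ}
    (Cg M : Fin n → Finset (Sym2 V)) (W : Hyperwalk V n k) : Prop :=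
  0 < k ∧ W.verts 0 ≠ W.verts (Fin.last k) ∧
  IsProfile Cg (applyHW M W) ∧
  (∀ j : Fin (k + 1), W.verts j ≠ W.verts 0 → W.verts j ≠ W.verts (Fin.last k) →
      dP (applyHW M W) (W.verts j) = dP M (W.verts j)) ∧
  dP (applyHW M W) (W.verts 0) = dP M (W.verts 0) + 1 ∧
  dP (applyHW M W) (W.verts (Fin.last k)) = dP M (W.verts (Fin.last k)) + 1

/-!
Each matching edge covers two vertices, so `Σ_v d_P(v) = 2 Σ_i |M_i|` for every profile.
Membership of an edge at a vertex `v` of the combined application is decided by the single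
hyperwalk through `v` (by vertex-disjointness), or by `P` itself if there is none. Hence the
result is still a family of matchings, and `d_P(v)` grows by one exactly at the two endpoints of
each hyperwalk: the degree sum grows by `2|I|`.
-/

open Finset

section Matchings

variable {V : Type*}

def IsLooplessMatching (M : Finset (Sym2 V)) : Prop :=
  (∀ e ∈ M, ¬ e.IsDiag) ∧ ∀ e ∈ M, ∀ f ∈ M, ∀ v : V, v ∈ e → v ∈ f → e = f

theorem IsMatchingOf.isLooplessMatching {Cg M : Finset (Sym2 V)} (h : IsMatchingOf Cg M) :
    IsLooplessMatching M :=
  h.2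

variable [DecidableEq V]

theorem IsLooplessMatching.card_filter_covered [Fintype V] {M : Finset (Sym2 V)}
    (hM : IsLooplessMatching M) :
    #{v : V | ∃ e ∈ M, v ∈ e} = 2 * #M := by
  have hcover : ({v : V | ∃ e ∈ M, v ∈ e} : Finset V) = M.biUnion Sym2.toFinset := by
    ext v; simp [Sym2.mem_toFinset]
  have hdisj : (M : Set (Sym2 V)).PairwiseDisjoint Sym2.toFinset := by
    intro e he f hf hef
    refine disjoint_left.mpr fun v hve hvf => hef ?_
    exact hM.2 e he f hf v (Sym2.mem_toFinset.mp hve) (Sym2.mem_toFinset.mp hvf)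
  rw [hcover, card_biUnion hdisj,
    sum_congr rfl fun e he => Sym2.card_toFinset_of_not_isDiag e (hM.1 e he),
    sum_const, smul_eq_mul, mul_comm]

theorem sum_dP_eq_two_mul_sum_card [Fintype V] {n : ℕ} {N : Fin n → Finset (Sym2 V)}
    (hN : ∀ i, IsLooplessMatching (N i)) :
    ∑ v : V, dP N v = 2 * ∑ i : Fin n, (N i).card := by
  simp only [dP, card_filter, mul_sum]
  rw [sum_comm]
  refine sum_congr rfl fun i _ => ?_
  rw [← (hN i).card_filter_covered, card_filter]
  -- the sides differ only in their `Decidable` instances (classical in `dP`)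
  congr!

end Matchings

section Agree

variable {V : Type*} {n : ℕ}

def AgreeAt (N N' : Fin n → Finset (Sym2 V)) (v : V) : Prop :=
  ∀ i e, v ∈ e → (e ∈ N i ↔ e ∈ N' i)

theorem dP_eq_of_agreeAt {N N' : Fin n → Finset (Sym2 V)} {v : V} (h : AgreeAt N N' v) :
    dP N v = dP N' v := by
  unfold dP
  congr 1
  ext i
  simp only [mem_filter, mem_univ, true_and]
  exact exists_congr fun e => ⟨fun ⟨he, hv⟩ => ⟨(h i e hv).1 he, hv⟩,
    fun ⟨he, hv⟩ => ⟨(h i e hv).2 he, hv⟩⟩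

theorem isLooplessMatching_of_forall_agreeAt {N : Fin n → Finset (Sym2 V)}
    (h : ∀ v, ∃ N' : Fin n → Finset (Sym2 V), (∀ i, IsLooplessMatching (N' i)) ∧ AgreeAt N N' v)
    (i : Fin n) : IsLooplessMatching (N i) := by
  refine ⟨fun e he => ?_, fun e he f hf v hve hvf => ?_⟩
  · obtain ⟨N', hN', hagree⟩ := h e.out.1
    exact (hN' i).1 e ((hagree i e (Sym2.out_fst_mem e)).1 he)
  · obtain ⟨N', hN', hagree⟩ := h v
    exact (hN' i).2 e ((hagree i e hve).1 he) f ((hagree i f hvf).1 hf) v hve hvf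

end Agree

namespace Hyperwalk

variable {V : Type*} [DecidableEq V] {n k : ℕ} (W : Hyperwalk V n k)

def endpoints : Finset V :=
  {W.verts 0, W.verts (Fin.last k)}

theorem verts_mem_vertSet (j : Fin (k + 1)) : W.verts j ∈ W.vertSet :=
  mem_image_of_mem _ (mem_univ j)

theorem endpoints_subset_vertSet : W.endpoints ⊆ W.vertSet := by
  simp only [endpoints, insert_subset_iff, singleton_subset_iff]
  exact ⟨W.verts_mem_vertSet 0, W.verts_mem_vertSet _⟩

theorem mem_vertSet_of_mem_edge {j : Fin k} {v : V} (hv : v ∈ W.edge j) : v ∈ W.vertSet := by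
  rcases Sym2.mem_iff.mp hv with rfl | rfl <;> exact W.verts_mem_vertSet _

theorem mem_vertSet_of_mem_addSet {i : Fin n} {e : Sym2 V} (he : e ∈ W.addSet i) {v : V}
    (hv : v ∈ e) : v ∈ W.vertSet := by
  obtain ⟨j, -, rfl⟩ := mem_image.mp he
  exact W.mem_vertSet_of_mem_edge hv

theorem mem_vertSet_of_mem_remSet {i : Fin n} {e : Sym2 V} (he : e ∈ W.remSet i) {v : V}
    (hv : v ∈ e) : v ∈ W.vertSet := by
  obtain ⟨j, -, rfl⟩ := mem_image.mp he
  exact W.mem_vertSet_of_mem_edge hv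

end Hyperwalk

namespace IsAugmenting

variable {V : Type*} [DecidableEq V] {n k : ℕ} {Cg M : Fin n → Finset (Sym2 V)}
  {W : Hyperwalk V n k}

theorem card_endpoints (h : IsAugmenting Cg M W) : W.endpoints.card = 2 :=
  card_pair h.2.1

theorem dP_applyHW_of_mem (h : IsAugmenting Cg M W) {v : V} (hv : v ∈ W.vertSet) :
    dP (applyHW M W) v = dP M v + if v ∈ W.endpoints then 1 else 0 := by
  obtain ⟨-, -, -, hinner, hfirst, hlast⟩ := h
  obtain ⟨j, -, rfl⟩ := mem_image.mp hv
  by_cases h0 : W.verts j = W.verts 0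
  · simp [h0, hfirst, Hyperwalk.endpoints]
  by_cases hl : W.verts j = W.verts (Fin.last k)
  · simp [hl, hlast, Hyperwalk.endpoints]
  simp [hinner j h0 hl, Hyperwalk.endpoints, h0, hl]

end IsAugmenting

section ApplyAll

variable {V : Type*} [DecidableEq V] {n m : ℕ}

def applyHWs (M : Fin n → Finset (Sym2 V)) (W : Fin m → Σ k : ℕ, Hyperwalk V n k) :
    Fin n → Finset (Sym2 V) :=
  fun i => (M i ∪ univ.sup fun t => (W t).2.addSet i) \ univ.sup fun t => (W t).2.remSet i

variable {Cg M : Fin n → Finset (Sym2 V)} {W : Fin m → Σ k : ℕ, Hyperwalk V n k}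

theorem agreeAt_applyHWs_applyHW
    (hdisj : ∀ t t', t ≠ t' → Disjoint ((W t).2.vertSet) ((W t').2.vertSet))
    {t : Fin m} {v : V} (hv : v ∈ (W t).2.vertSet) :
    AgreeAt (applyHWs M W) (applyHW M (W t).2) v := by
  intro i e hve
  have hlocal : ∀ t', (e ∈ (W t').2.addSet i ∨ e ∈ (W t').2.remSet i) → t' = t := by
    intro t' he
    by_contra hne
    have hv' : v ∈ (W t').2.vertSet := he.elim ((W t').2.mem_vertSet_of_mem_addSet · hve)
      ((W t').2.mem_vertSet_of_mem_remSet · hve)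
    exact disjoint_left.mp (hdisj t' t hne) hv' hv
  simp only [applyHWs, applyHW, mem_sdiff, mem_union, mem_sup, mem_univ, true_and]
  grind

theorem agreeAt_applyHWs_self {v : V} (hv : ∀ t, v ∉ (W t).2.vertSet) :
    AgreeAt (applyHWs M W) M v := by
  intro i e hve
  have hadd : ∀ t, e ∉ (W t).2.addSet i := fun t he =>
    hv t ((W t).2.mem_vertSet_of_mem_addSet he hve)
  have hrem : ∀ t, e ∉ (W t).2.remSet i := fun t he =>
    hv t ((W t).2.mem_vertSet_of_mem_remSet he hve)
  simp [applyHWs, hadd, hrem]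

theorem isLooplessMatching_applyHWs (hprof : IsProfile Cg M)
    (haug : ∀ t, IsAugmenting Cg M (W t).2)
    (hdisj : ∀ t t', t ≠ t' → Disjoint ((W t).2.vertSet) ((W t').2.vertSet)) (i : Fin n) :
    IsLooplessMatching (applyHWs M W i) := by
  refine isLooplessMatching_of_forall_agreeAt (fun v => ?_) i
  by_cases hv : ∃ t, v ∈ (W t).2.vertSet
  · obtain ⟨t, hv⟩ := hv
    exact ⟨applyHW M (W t).2, fun i => ((haug t).2.2.1 i).isLooplessMatching,
      agreeAt_applyHWs_applyHW hdisj hv⟩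
  · exact ⟨M, fun i => (hprof i).isLooplessMatching, agreeAt_applyHWs_self (not_exists.mp hv)⟩

theorem dP_applyHWs (haug : ∀ t, IsAugmenting Cg M (W t).2)
    (hdisj : ∀ t t', t ≠ t' → Disjoint ((W t).2.vertSet) ((W t').2.vertSet)) (v : V) :
    dP (applyHWs M W) v = dP M v + ∑ t, if v ∈ (W t).2.endpoints then 1 else 0 := by
  by_cases hv : ∃ t, v ∈ (W t).2.vertSet
  · obtain ⟨t, hv⟩ := hv
    have hothers : ∀ t' ≠ t, v ∉ (W t').2.endpoints := fun t' hne hv' =>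
      disjoint_left.mp (hdisj t' t hne) ((W t').2.endpoints_subset_vertSet hv') hv
    rw [dP_eq_of_agreeAt (agreeAt_applyHWs_applyHW hdisj hv), (haug t).dP_applyHW_of_mem hv,
      sum_eq_single t (fun t' _ hne => if_neg (hothers t' hne)) (absurd (mem_univ t))]
  · rw [dP_eq_of_agreeAt (agreeAt_applyHWs_self (not_exists.mp hv)),
      sum_eq_zero fun t _ => if_neg fun h => not_exists.mp hv t ((W t).2.endpoints_subset_vertSet h), add_zero]

theorem sum_dP_applyHWs [Fintype V] (haug : ∀ t, IsAugmenting Cg M (W t).2)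
    (hdisj : ∀ t t', t ≠ t' → Disjoint ((W t).2.vertSet) ((W t').2.vertSet)) :
    ∑ v : V, dP (applyHWs M W) v = ∑ v : V, dP M v + 2 * m := by
  simp only [dP_applyHWs haug hdisj, sum_add_distrib, add_right_inj]
  rw [sum_comm]
  simp [sum_ite_mem, (haug _).card_endpoints, mul_comm]

end ApplyAll

theorem stmt_8_general {V : Type*} [DecidableEq V] [Fintype V] (n m : ℕ)
    (Cg M : Fin n → Finset (Sym2 V))
    (hprof : IsProfile Cg M)
    (W : Fin m → Σ k : ℕ, Hyperwalk V n k)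
    (haug : ∀ t, IsAugmenting Cg M (W t).2)
    (hdisj : ∀ t t', t ≠ t' → Disjoint ((W t).2.vertSet) ((W t').2.vertSet)) :
    ∑ i : Fin n,
        ((M i ∪ Finset.univ.sup (fun t => (W t).2.addSet i))
            \ Finset.univ.sup (fun t => (W t).2.remSet i)).card
      = (∑ i : Fin n, (M i).card) + m := by
  have hsum := sum_dP_applyHWs haug hdisj
  rw [sum_dP_eq_two_mul_sum_card (isLooplessMatching_applyHWs hprof haug hdisj),
    sum_dP_eq_two_mul_sum_card fun i => (hprof i).isLooplessMatching] at hsum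
  change ∑ i, (applyHWs M W i).card = _
  omega

/-- Let `P = ((𝒞₀,M₀),…,(𝒞_α,M_α))` be a profile and `I = {W_1,…,W_m}` a
collection of pairwise vertex-disjoint augmenting hyperwalks of `P` (each a walk in the
graph `C`).  Applying all hyperwalks of `I` yields a profile `P'` with
`Σ_i |M'_i| = Σ_i |M_i| + |I|`. -/
theorem stmt_8 {V : Type*} [DecidableEq V] [Fintype V] (n m : ℕ)
    (C : SimpleGraph V)
    (Cg M : Fin n → Finset (Sym2 V))
    (hprof : IsProfile Cg M)
    (W : Fin m → Σ k : ℕ, Hyperwalk V n k)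
    (hwalk : ∀ t, ∀ j : Fin (W t).1,
      C.Adj ((W t).2.verts j.castSucc) ((W t).2.verts j.succ))
    (haug : ∀ t, IsAugmenting Cg M (W t).2)
    (hdisj : ∀ t t', t ≠ t' → Disjoint ((W t).2.vertSet) ((W t').2.vertSet)) :
    ∑ i : Fin n,
        ((M i ∪ Finset.univ.sup (fun t => (W t).2.addSet i))
            \ Finset.univ.sup (fun t => (W t).2.remSet i)).card
      = (∑ i : Fin n, (M i).card) + m :=
  stmt_8_general n m Cg M hprof W haug hdisj
end

section
/- Let H be a graph of maximum degree Δ on n vertices, and suppose an independent set I of H is such that every vertex of H is, with probability at least 1 − ε/(10Δ), 'decided' (i.e. in I or adjacent to I). Let I' be any maximal independent set containing I obtained by adding only undecided vertices. Then E[|I|] ≥ (1−ε)·E[|I'|], provided ε ≤ 1. -/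
/-!
Each vertex of `I'` is either in `I` or undecided, so `|I'| ≤ |I| + |U|` for the set `U` of
undecided vertices, and `E|U| ≤ n ε/(10Δ)` by linearity of expectation. On the other hand `I'` is a
maximal independent set, hence dominating, so `n ≤ (Δ + 1)|I'|`. As `Δ + 1 ≤ 10Δ`, this gives
`E|U| ≤ ε E|I'|`, whence `E|I'| ≤ E|I| + ε E|I'|`.
-/

open MeasureTheory Finset

theorem Finset.card_le_card_add_card_filter {α : Type*} [Fintype α] [DecidableEq α]
    {s t : Finset α} {p : α → Prop} [DecidablePred p] (h : ∀ a ∈ t, a ∉ s → p a) :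
    #t ≤ #s + #{a | p a} := by
  have hsub : t ⊆ s ∪ ({a | p a} : Finset α) := fun a ha => by
    by_cases has : a ∈ s
    · exact mem_union_left _ has
    · exact mem_union_right _ (mem_filter.2 ⟨mem_univ a, h a ha has⟩)
  exact (card_le_card hsub).trans (card_union_le _ _)

theorem SimpleGraph.card_le_card_mul_of_dominating {V : Type*} [Fintype V] (G : SimpleGraph V)
    [DecidableRel G.Adj] {S : Finset V} (hS : ∀ v ∉ S, ∃ u ∈ S, G.Adj v u) :
    Fintype.card V ≤ #S * (G.maxDegree + 1) := by
  classical
  have hcover : (univ : Finset V) ⊆ S.biUnion fun u => insert u (G.neighborFinset u) := by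
    intro v _
    rw [mem_biUnion]
    by_cases hv : v ∈ S
    · exact ⟨v, hv, mem_insert_self v _⟩
    · obtain ⟨u, hu, hvu⟩ := hS v hv
      exact ⟨u, hu, mem_insert_of_mem ((G.mem_neighborFinset u v).2 hvu.symm)⟩
  calc Fintype.card V = #(univ : Finset V) := card_univ.symm
    _ ≤ #(S.biUnion fun u => insert u (G.neighborFinset u)) := card_le_card hcover
    _ ≤ #S * (G.maxDegree + 1) := card_biUnion_le_card_mul _ _ _ fun u _ =>
      (card_insert_le _ _).trans
        (by rw [G.card_neighborFinset_eq_degree]; exact Nat.succ_le_succ (G.degree_le_maxDegree u))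

theorem natCast_card_eq_sum_indicator {Ω ι : Type*} [Fintype ι] (U : Ω → Finset ι) (ω : Ω) :
    (#(U ω) : ℝ) = ∑ i, {ω | i ∈ U ω}.indicator 1 ω := by
  classical
  simp only [Set.indicator_apply, Set.mem_ofPred_eq, Pi.one_apply]
  rw [sum_boole]
  simp only [subset_univ, filter_mem_eq_of_subset]

section RandomFinset

variable {Ω ι : Type*} [MeasurableSpace Ω] {μ : Measure Ω} [Fintype ι]

theorem measureReal_compl_le_of_ofReal_one_sub_le [IsProbabilityMeasure μ] {s : Set Ω}
    (hs : MeasurableSet s) {δ : ℝ} (h : ENNReal.ofReal (1 - δ) ≤ μ s) : μ.real sᶜ ≤ δ := by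
  rw [probReal_compl_eq_one_sub hs]
  linarith [(ENNReal.ofReal_le_iff_le_toReal (measure_ne_top μ s)).1 h, measureReal_def μ s]

theorem integrable_natCast_card [IsFiniteMeasure μ] {U : Ω → Finset ι}
    (hU : ∀ i, MeasurableSet {ω | i ∈ U ω}) : Integrable (fun ω => (#(U ω) : ℝ)) μ := by
  simp_rw [natCast_card_eq_sum_indicator]
  exact integrable_finsetSum _ fun i _ => (integrable_const 1).indicator (hU i)

theorem integral_natCast_card [IsFiniteMeasure μ] {U : Ω → Finset ι}
    (hU : ∀ i, MeasurableSet {ω | i ∈ U ω}) :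
    ∫ ω, (#(U ω) : ℝ) ∂μ = ∑ i, μ.real {ω | i ∈ U ω} := by
  simp_rw [natCast_card_eq_sum_indicator]
  rw [integral_finsetSum _ fun i _ => (integrable_const 1).indicator (hU i)]
  exact sum_congr rfl fun i _ => integral_indicator_one (hU i)

theorem integral_natCast_card_le [IsFiniteMeasure μ] {U : Ω → Finset ι}
    (hU : ∀ i, MeasurableSet {ω | i ∈ U ω}) {δ : ℝ} (hδ : ∀ i, μ.real {ω | i ∈ U ω} ≤ δ) :
    ∫ ω, (#(U ω) : ℝ) ∂μ ≤ Fintype.card ι * δ := by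
  rw [integral_natCast_card hU]
  calc ∑ i, μ.real {ω | i ∈ U ω} ≤ ∑ _i : ι, δ := sum_le_sum fun i _ => hδ i
    _ = Fintype.card ι * δ := by simp

theorem SimpleGraph.card_le_mul_integral_of_dominating [IsProbabilityMeasure μ]
    (G : SimpleGraph ι) [DecidableRel G.Adj] {S : Ω → Finset ι}
    (hS : ∀ ω, ∀ v ∉ S ω, ∃ u ∈ S ω, G.Adj v u) (hint : Integrable (fun ω => (#(S ω) : ℝ)) μ) :
    (Fintype.card ι : ℝ) ≤ (G.maxDegree + 1) * ∫ ω, (#(S ω) : ℝ) ∂μ := by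
  have hdom : ∀ ω, (Fintype.card ι : ℝ) ≤ (G.maxDegree + 1) * #(S ω) := fun ω => by
    rw [mul_comm]; exact_mod_cast G.card_le_card_mul_of_dominating (hS ω)
  have := integral_mono (integrable_const _) (hint.const_mul _) hdom
  rwa [integral_const, probReal_univ, one_smul, integral_const_mul] at this

end RandomFinset

theorem stmt_12_general {V Ω : Type*} [Fintype V] [MeasurableSpace Ω]
    (μ : Measure Ω) [IsProbabilityMeasure μ]
    (H : SimpleGraph V) [DecidableRel H.Adj]
    (Δ : ℕ) (hΔ : 1 ≤ Δ) (hdeg : H.maxDegree ≤ Δ)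
    (ε : ℝ) (hε : 0 < ε)
    (I I' : Ω → Finset V)
    (hmeasdec : ∀ v : V, MeasurableSet {ω | v ∈ I ω ∨ ∃ u ∈ I ω, H.Adj v u})
    (hdec : ∀ v : V,
      ENNReal.ofReal (1 - ε / (10 * Δ)) ≤ μ {ω | v ∈ I ω ∨ ∃ u ∈ I ω, H.Adj v u})
    (hadd : ∀ ω, ∀ v ∈ I' ω, v ∉ I ω → ¬ (v ∈ I ω ∨ ∃ u ∈ I ω, H.Adj v u))
    (hmax : ∀ ω, ∀ v : V, v ∉ I' ω → ∃ u ∈ I' ω, H.Adj v u)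
    (hint : Integrable (fun ω => ((I ω).card : ℝ)) μ)
    (hint' : Integrable (fun ω => ((I' ω).card : ℝ)) μ) :
    (1 - ε) * ∫ ω, ((I' ω).card : ℝ) ∂μ ≤ ∫ ω, ((I ω).card : ℝ) ∂μ := by
  classical
  set δ : ℝ := ε / (10 * Δ)
  set U : Ω → Finset V := fun ω => {v | ¬ (v ∈ I ω ∨ ∃ u ∈ I ω, H.Adj v u)}
  have hU_eq : ∀ v, {ω | v ∈ U ω} = {ω | v ∈ I ω ∨ ∃ u ∈ I ω, H.Adj v u}ᶜ := fun v => by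
    ext ω; simp [U]
  have hU_meas : ∀ v, MeasurableSet {ω | v ∈ U ω} := fun v => hU_eq v ▸ (hmeasdec v).compl
  have hEU : ∫ ω, ((U ω).card : ℝ) ∂μ ≤ Fintype.card V * δ :=
    integral_natCast_card_le hU_meas fun v =>
      hU_eq v ▸ measureReal_compl_le_of_ofReal_one_sub_le (hmeasdec v) (hdec v)
  have hEI' : ∫ ω, ((I' ω).card : ℝ) ∂μ ≤
      ∫ ω, ((I ω).card : ℝ) ∂μ + ∫ ω, ((U ω).card : ℝ) ∂μ := by
    rw [← integral_add hint (integrable_natCast_card hU_meas)]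
    exact integral_mono hint' (hint.add (integrable_natCast_card hU_meas)) fun ω =>
      (Nat.cast_le.2 (card_le_card_add_card_filter (hadd ω))).trans_eq (Nat.cast_add _ _)
  have hB : 0 ≤ ∫ ω, ((I' ω).card : ℝ) ∂μ := integral_nonneg fun ω => Nat.cast_nonneg _
  have hn : (Fintype.card V : ℝ) ≤ (Δ + 1) * ∫ ω, ((I' ω).card : ℝ) ∂μ :=
    (H.card_le_mul_integral_of_dominating hmax hint').trans <|
      mul_le_mul_of_nonneg_right (by exact_mod_cast Nat.succ_le_succ hdeg) hB
  have hδ : ((Δ : ℝ) + 1) * δ ≤ ε := by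
    have hΔ' : (1 : ℝ) ≤ Δ := by exact_mod_cast hΔ
    rw [mul_div_assoc', div_le_iff₀ (by positivity)]
    nlinarith
  have hδ0 : 0 ≤ δ := by positivity
  linarith [mul_le_mul_of_nonneg_right hn hδ0, mul_le_mul_of_nonneg_right hδ hB]

/-- Let `H` have maximum degree at most `Δ` and let `I` be a random
independent set such that every vertex is decided (in `I` or adjacent to `I`) with
probability at least `1 − ε/(10Δ)`.  If `I'` is a maximal independent set obtained from `I`
by adding only undecided vertices, then `E[|I|] ≥ (1−ε)·E[|I'|]` (for `ε ≤ 1`). -/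
theorem stmt_12 {V Ω : Type*} [Fintype V] [DecidableEq V] [MeasurableSpace Ω]
    (μ : Measure Ω) [IsProbabilityMeasure μ]
    (H : SimpleGraph V) [DecidableRel H.Adj]
    (Δ : ℕ) (hΔ : 1 ≤ Δ) (hdeg : H.maxDegree ≤ Δ)
    (ε : ℝ) (hε : 0 < ε) (hε1 : ε ≤ 1)
    (I I' : Ω → Finset V)
    (hIind : ∀ ω, ∀ u ∈ I ω, ∀ v ∈ I ω, ¬ H.Adj u v)
    (hI'ind : ∀ ω, ∀ u ∈ I' ω, ∀ v ∈ I' ω, ¬ H.Adj u v)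
    (hsub : ∀ ω, I ω ⊆ I' ω)
    (hmeasdec : ∀ v : V, MeasurableSet {ω | v ∈ I ω ∨ ∃ u ∈ I ω, H.Adj v u})
    (hdec : ∀ v : V,
      ENNReal.ofReal (1 - ε / (10 * Δ)) ≤ μ {ω | v ∈ I ω ∨ ∃ u ∈ I ω, H.Adj v u})
    (hadd : ∀ ω, ∀ v ∈ I' ω, v ∉ I ω → ¬ (v ∈ I ω ∨ ∃ u ∈ I ω, H.Adj v u))
    (hmax : ∀ ω, ∀ v : V, v ∉ I' ω → ∃ u ∈ I' ω, H.Adj v u)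
    (hint : Integrable (fun ω => ((I ω).card : ℝ)) μ)
    (hint' : Integrable (fun ω => ((I' ω).card : ℝ)) μ) :
    (1 - ε) * ∫ ω, ((I' ω).card : ℝ) ∂μ ≤ ∫ ω, ((I ω).card : ℝ) ∂μ :=
  stmt_12_general μ H Δ hΔ hdeg ε hε I I' hmeasdec hdec hadd hmax hint hint'
end

section
/- Fix a vertex v and suppose: (i) X_v, and the events {u matched in Z} for each neighbor u, together with edge realizations, satisfy that for each relevant edge e_i = {v, u_i} the indicator of 'e_i realized and u_i unmatched' is independent of 'v unmatched', with Pr[e_i realized] = p_{e_i} and Pr[u_i matched] = Pr[X_{u_i}]; (ii) conditioned on v unmatched, x_v = Σ_i x_{e_i} where x_{e_i} = f_{e_i}/(p_{e_i}(1−Pr[X_v])(1−Pr[X_{u_i}])) when e_i is realized and u_i is unmatched, and 0 otherwise; (iii) Σ_i E[f_{e_i}] ≤ n_v and Pr[X_v] ≤ c_v with n_v + c_v ≤ 1. Then E[x_v | v unmatched] ≤ 1. -/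
open MeasureTheory ProbabilityTheory

/-!
Conditioning on `v` unmatched divides by `Pr[v unmatched] ≥ 1 - Pr[X_v] ≥ 1 - c_v ≥ n_v`. By
independence, the integral of `x_{e_i}` over that event is `E[f_i]` times
`Pr[e_i realized, u_i and v unmatched]` divided by the same product of probabilities, hence at
most `E[f_i]`; summing gives at most `n_v`.
-/

lemma mul_toReal_ofReal_div_le {a : ℝ} (ha : 0 ≤ a) (K : ℝ) :
    a * (ENNReal.ofReal K).toReal / K ≤ a := by
  rcases le_or_gt K 0 with hK | hK
  · simpa [ENNReal.ofReal_of_nonpos hK] using ha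
  · rw [ENNReal.toReal_ofReal hK.le, mul_div_cancel_right₀ a hK.ne']

lemma one_sub_toReal_le_toReal_compl {Ω : Type*} [MeasurableSpace Ω] (μ : Measure Ω)
    [IsProbabilityMeasure μ] (s : Set Ω) : 1 - (μ s).toReal ≤ (μ sᶜ).toReal := by
  have h := measureReal_union_le (μ := μ) s sᶜ
  rw [Set.union_compl_self, probReal_univ] at h
  simp only [Measure.real] at h
  linarith

lemma integral_cond_le_one_of_setIntegral_le {Ω : Type*} [MeasurableSpace Ω] {μ : Measure Ω}
    {s : Set Ω} {g : Ω → ℝ} (h : ∫ ω in s, g ω ∂μ ≤ (μ s).toReal) :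
    ∫ ω, g ω ∂(μ[|s]) ≤ 1 := by
  rw [ProbabilityTheory.cond, integral_smul_measure, ENNReal.toReal_inv, smul_eq_mul]
  exact inv_mul_le_one_of_le₀ h ENNReal.toReal_nonneg

lemma setIntegral_indicator_div_le {Ω : Type*} [MeasurableSpace Ω] {μ : Measure Ω}
    {s t : Set Ω} (hs : MeasurableSet s) {g : Ω → ℝ} (hg : 0 ≤ ∫ ω, g ω ∂μ) {K : ℝ}
    (hmeas : μ (s ∩ t) = ENNReal.ofReal K)
    (hindep : ∫ ω in s ∩ t, g ω ∂μ = (∫ ω, g ω ∂μ) * (μ (s ∩ t)).toReal) :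
    ∫ ω in t, s.indicator (fun ω' => g ω' / K) ω ∂μ ≤ ∫ ω, g ω ∂μ := by
  rw [integral_indicator hs, Measure.restrict_restrict hs, integral_div, hindep, hmeas]
  exact mul_toReal_ofReal_div_le hg K

theorem stmt_16_general {Ω : Type*} [MeasurableSpace Ω] (μ : Measure Ω) [IsProbabilityMeasure μ]
    (r : ℕ) (Xv : Set Ω) (Xu Re : Fin r → Set Ω) (f : Fin r → Ω → ℝ)
    (p : Fin r → ℝ) (cv nv : ℝ)
    (hXu : ∀ i, MeasurableSet (Xu i))
    (hRe : ∀ i, MeasurableSet (Re i))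
    (hf0 : ∀ i ω, 0 ≤ f i ω) (hfint : ∀ i, Integrable (f i) μ)
    (hprob : ∀ i, μ (Re i ∩ (Xu i)ᶜ ∩ Xvᶜ)
      = ENNReal.ofReal (p i * (1 - (μ (Xu i)).toReal) * (1 - (μ Xv).toReal)))
    (hfind : ∀ i, ∫ ω in Re i ∩ (Xu i)ᶜ ∩ Xvᶜ, f i ω ∂μ
      = (∫ ω, f i ω ∂μ) * (μ (Re i ∩ (Xu i)ᶜ ∩ Xvᶜ)).toReal)
    (hnv : (∑ i, ∫ ω, f i ω ∂μ) ≤ nv)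
    (hcv : (μ Xv).toReal ≤ cv)
    (hsum : nv + cv ≤ 1) :
    ∫ ω, (∑ i, (Re i ∩ (Xu i)ᶜ).indicator
        (fun ω' => f i ω' / (p i * (1 - (μ Xv).toReal) * (1 - (μ (Xu i)).toReal))) ω)
      ∂(ProbabilityTheory.cond μ Xvᶜ) ≤ 1 := by
  apply integral_cond_le_one_of_setIntegral_le
  have hS : ∀ i, MeasurableSet (Re i ∩ (Xu i)ᶜ) := fun i => (hRe i).inter (hXu i).compl
  have hterm : ∀ i, ∫ ω in Xvᶜ, (Re i ∩ (Xu i)ᶜ).indicator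
      (fun ω' => f i ω' / (p i * (1 - (μ Xv).toReal) * (1 - (μ (Xu i)).toReal))) ω ∂μ
      ≤ ∫ ω, f i ω ∂μ := fun i =>
    setIntegral_indicator_div_le (hS i) (integral_nonneg (hf0 i))
      ((hprob i).trans (by rw [mul_right_comm])) (hfind i)
  have hint : ∀ i, Integrable ((Re i ∩ (Xu i)ᶜ).indicator
      (fun ω' => f i ω' / (p i * (1 - (μ Xv).toReal) * (1 - (μ (Xu i)).toReal))))
      (μ.restrict Xvᶜ) := fun i => (((hfint i).div_const _).indicator (hS i)).restrict
  calc ∫ ω in Xvᶜ, (∑ i, (Re i ∩ (Xu i)ᶜ).indicator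
        (fun ω' => f i ω' / (p i * (1 - (μ Xv).toReal) * (1 - (μ (Xu i)).toReal))) ω) ∂μ
      ≤ ∑ i, ∫ ω, f i ω ∂μ := by
        rw [integral_finsetSum _ fun i _ => hint i]
        exact Finset.sum_le_sum fun i _ => hterm i
    _ ≤ 1 - (μ Xv).toReal := by linarith
    _ ≤ (μ Xvᶜ).toReal := one_sub_toReal_le_toReal_compl μ Xv

/-- With `Xv` the event that `v` is matched in `Z`, `Xu i` the event that
the neighbor `u_i` is matched, `Re i` the event that the non-crucial edge `e_i = {v,u_i}` is
realized (probability `p i`), and `f i` random variables independent of everything, where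
`x_{e_i} = f_i/(p_i(1−Pr[Xv])(1−Pr[Xu_i]))` on the event `Re i ∩ (Xu i)ᶜ` and `0` otherwise,
if `Σ_i E[f_i] ≤ n_v`, `Pr[Xv] ≤ c_v` and `n_v + c_v ≤ 1`, then
`E[x_v | v unmatched] ≤ 1`. -/
theorem stmt_16 {Ω : Type*} [MeasurableSpace Ω] (μ : Measure Ω) [IsProbabilityMeasure μ]
    (r : ℕ) (Xv : Set Ω) (Xu Re : Fin r → Set Ω) (f : Fin r → Ω → ℝ)
    (p : Fin r → ℝ) (cv nv : ℝ)
    (hXv : MeasurableSet Xv) (hXu : ∀ i, MeasurableSet (Xu i))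
    (hRe : ∀ i, MeasurableSet (Re i))
    (hp : ∀ i, 0 < p i ∧ p i ≤ 1)
    (hpRe : ∀ i, μ (Re i) = ENNReal.ofReal (p i))
    (hf0 : ∀ i ω, 0 ≤ f i ω) (hfint : ∀ i, Integrable (f i) μ)
    (hprob : ∀ i, μ (Re i ∩ (Xu i)ᶜ ∩ Xvᶜ)
      = ENNReal.ofReal (p i * (1 - (μ (Xu i)).toReal) * (1 - (μ Xv).toReal)))
    (hfind : ∀ i, ∫ ω in Re i ∩ (Xu i)ᶜ ∩ Xvᶜ, f i ω ∂μ
      = (∫ ω, f i ω ∂μ) * (μ (Re i ∩ (Xu i)ᶜ ∩ Xvᶜ)).toReal)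
    (hnv : (∑ i, ∫ ω, f i ω ∂μ) ≤ nv)
    (hcv : (μ Xv).toReal ≤ cv)
    (h0n : 0 ≤ nv) (h0c : 0 ≤ cv) (hsum : nv + cv ≤ 1) :
    ∫ ω, (∑ i, (Re i ∩ (Xu i)ᶜ).indicator
        (fun ω' => f i ω' / (p i * (1 - (μ Xv).toReal) * (1 - (μ (Xu i)).toReal))) ω)
      ∂(ProbabilityTheory.cond μ Xvᶜ) ≤ 1 :=
  stmt_16_general μ r Xv Xu Re f p cv nv hXu hRe hf0 hfint hprob hfind hnv hcv hsum
end
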